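/- Let Z be a Blaschke sequence in 𝔻 with Blaschke product B = B_Z. Suppose that for every sequence (ζ_n) of points of Z the compositions B∘φ_{ζ_n} do not converge to 0 uniformly on compact subsets of 𝔻. Then Z is a finite union of uniformly separated sequences. (Thus, to test uniform nonvanishing of B it suffices to test the Möbius maps φ_ζ with ζ ∈ Z.) -/

import Mathlib

open Complex MeasureTheory Metric Filter Set List

noncomputable section

/-- The Möbius involution `φ_a(z) = (a - z)/(1 - ā z)` of the unit disk interchanging `0` and `a`. -/
def mobius (a z : ℂ) : ℂ := (a - z) / (1 - (starRingEnd ℂ) a * z)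

/-- The pseudohyperbolic metric `ψ(z,w) = |z - w| / |1 - w̄ z|`. -/
def pseudoDist (z w : ℂ) : ℝ := ‖(z - w) / (1 - (starRingEnd ℂ) w * z)‖

/-- A single Blaschke factor with zero at `a` (equal to `z` when `a = 0`). -/
def blaschkeFactor (a z : ℂ) : ℂ :=
  if a = 0 then z
  else ((starRingEnd ℂ) a / (‖a‖ : ℂ)) * ((a - z) / (1 - (starRingEnd ℂ) a * z))

/-- The Blaschke product associated with the sequence `Z`. -/
def blaschkeProduct (Z : ℕ → ℂ) (z : ℂ) : ℂ := ∏' k, blaschkeFactor (Z k) z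

/-- `Z` is a Blaschke sequence in the unit disk: `Σ (1 - |z_k|²) < ∞`. -/
def IsBlaschkeSeq (Z : ℕ → ℂ) : Prop :=
  (∀ k, ‖Z k‖ < 1) ∧ Summable (fun k => 1 - ‖Z k‖ ^ 2)

/-- A sequence is uniformly separated if `inf_k ∏_{j ≠ k} ψ(z_j, z_k) > 0`. -/
def UniformlySeparated {ι : Type*} (Z : ι → ℂ) : Prop :=
  ∃ δ : ℝ, 0 < δ ∧ ∀ k : ι, δ ≤ ∏' j : {j : ι // j ≠ k}, pseudoDist (Z j.1) (Z k)

/-- `Z` is a finite union of uniformly separated sequences. -/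
def FiniteUnionUnifSep (Z : ℕ → ℂ) : Prop :=
  ∃ (n : ℕ) (c : ℕ → Fin n), ∀ i : Fin n,
    UniformlySeparated (fun k : {k : ℕ // c k = i} => Z k.1)

/-- `φ` is a conformal automorphism of the unit disk. -/
def IsDiskAut (φ : ℂ → ℂ) : Prop :=
  ∃ c a : ℂ, ‖c‖ = 1 ∧ ‖a‖ < 1 ∧ ∀ z, φ z = c * mobius a z

/-- The sequence of functions `F n` tends to `0` uniformly on compact subsets of the unit disk. -/
def TendstoZeroOnCompacts (F : ℕ → ℂ → ℂ) : Prop :=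
  ∀ K : Set ℂ, K ⊆ Metric.ball (0 : ℂ) 1 → IsCompact K →
    TendstoUniformlyOn F (fun _ => (0 : ℂ)) Filter.atTop K

/-- `B` is uniformly (bounded away from) nonzero: for no sequence of conformal automorphisms
`φ_n` of the disk do the compositions `B ∘ φ_n` tend to `0` uniformly on compacta. -/
def UniformlyNonzero (B : ℂ → ℂ) : Prop :=
  ∀ φ : ℕ → ℂ → ℂ, (∀ n, IsDiskAut (φ n)) →
    ¬ TendstoZeroOnCompacts (fun n z => B (φ n z))

/-- The Carleson square based on the arc `{e^{iθ} : θ₀ ≤ θ ≤ θ₀ + 2πℓ}` of normalized length `ℓ`. -/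
def carlesonBox (θ₀ ℓ : ℝ) : Set ℂ :=
  {z : ℂ | z ≠ 0 ∧ ‖z‖ < 1 ∧ 1 - ‖z‖ < ℓ ∧
    ∃ θ ∈ Set.Icc θ₀ (θ₀ + 2 * Real.pi * ℓ),
      (z / (‖z‖ : ℂ)) = Complex.exp (θ * Complex.I)}

/-- `μ` is a Carleson measure with constant `C`. -/
def CarlesonWith (μ : Measure ℂ) (C : ℝ) : Prop :=
  ∀ θ₀ ℓ : ℝ, 0 < ℓ → ℓ ≤ 1 → μ (carlesonBox θ₀ ℓ) ≤ ENNReal.ofReal (C * ℓ)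

/-- `μ` is a Carleson measure. -/
def IsCarlesonMeasure (μ : Measure ℂ) : Prop := ∃ C : ℝ, CarlesonWith μ C

/-- The measure `Σ_k (1 - |z_k|²) δ_{z_k}`. -/
def seqMeasure (Z : ℕ → ℂ) : Measure ℂ :=
  Measure.sum (fun k => ENNReal.ofReal (1 - ‖Z k‖ ^ 2) • Measure.dirac (Z k))

/-- The number of occurrences of `ζ` in the sequence `Z`. -/
def multIn (Z : ℕ → ℂ) (ζ : ℂ) : ℕ := Nat.card {k : ℕ // Z k = ζ}

/-- `f` vanishes at each point of `Z` to order at least its multiplicity in `Z`. -/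
def VanishesOn (f : ℂ → ℂ) (Z : ℕ → ℂ) : Prop :=
  ∀ ζ : ℂ, ∀ j : ℕ, j < multIn Z ζ → iteratedDeriv j f ζ = 0

/-- The Bergman space norm `‖f‖_{A^p} = (∫_𝔻 |f|^p dA)^{1/p}`. -/
def bergmanNorm (p : ℝ) (f : ℂ → ℂ) : ℝ :=
  (∫ z in Metric.ball (0 : ℂ) 1, ‖f z‖ ^ p) ^ (1 / p)

/-- Membership in the Bergman space `A^p`. -/
def MemBergman (p : ℝ) (f : ℂ → ℂ) : Prop :=
  AnalyticOnNhd ℂ f (Metric.ball 0 1) ∧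
    IntegrableOn (fun z => ‖f z‖ ^ p) (Metric.ball (0 : ℂ) 1)

/-- The weighted Bergman norm `‖f‖_{A^{p,α}} = (∫_𝔻 |f(z)|^p (1-|z|²)^α dA(z))^{1/p}`. -/
def bergmanNormW (p α : ℝ) (f : ℂ → ℂ) : ℝ :=
  (∫ z in Metric.ball (0 : ℂ) 1,
    ‖f z‖ ^ p * (1 - ‖z‖ ^ 2) ^ α) ^ (1 / p)

/-- Membership in the weighted Bergman space `A^{p,α}`. -/
def MemBergmanW (p α : ℝ) (f : ℂ → ℂ) : Prop :=
  AnalyticOnNhd ℂ f (Metric.ball 0 1) ∧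
    IntegrableOn (fun z => ‖f z‖ ^ p * (1 - ‖z‖ ^ 2) ^ α)
      (Metric.ball (0 : ℂ) 1)

/-- The Hardy space integral means `M_p(f,r)^p`. -/
def hardyMean (p : ℝ) (f : ℂ → ℂ) (r : ℝ) : ℝ :=
  (2 * Real.pi)⁻¹ *
    ∫ θ in (0 : ℝ)..(2 * Real.pi), ‖f (r * Complex.exp (θ * Complex.I))‖ ^ p

/-- Membership in the Hardy space `H^p`, `0 < p < ∞`. -/
def MemHardy (p : ℝ) (f : ℂ → ℂ) : Prop :=
  AnalyticOnNhd ℂ f (Metric.ball 0 1) ∧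
    ∃ M : ℝ, ∀ r : ℝ, 0 < r → r < 1 → hardyMean p f r ≤ M

/-- `‖f‖_{H^p}^p = sup_{0<r<1} M_p(f,r)^p`. -/
def hardyNormP (p : ℝ) (f : ℂ → ℂ) : ℝ :=
  sSup {x : ℝ | ∃ r : ℝ, 0 < r ∧ r < 1 ∧ x = hardyMean p f r}

/-- Membership in `H^∞`: bounded analytic functions on the disk. -/
def MemHardyInf (f : ℂ → ℂ) : Prop :=
  AnalyticOnNhd ℂ f (Metric.ball 0 1) ∧
    ∃ M : ℝ, ∀ z ∈ Metric.ball (0 : ℂ) 1, ‖f z‖ ≤ M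

/-
If the local sums `∑ j, (1 - ψ(z_j, z_k)²)` are bounded by `M` uniformly in `k`, every `z_k` has
at most `2M` points of `Z` within pseudohyperbolic distance `1/2`, so a greedy colouring splits `Z`
into `⌊2M⌋ + 1` classes that are `1/2`-separated; inside a class `ψ ≥ exp (-2 (1 - ψ²))` bounds
`∏_{j ≠ k} ψ(z_j, z_k)` below by `exp (-2M)`.
If the local sums are unbounded along a sequence `ζ_n = z_{k_n}`, the Möbius invariance of `ψ`
gives `|B (φ_{ζ_n} z)| = ∏ j, ψ(z, φ_{ζ_n} z_j) ≤ exp (-(1 - |z|²)/8 · ∑ j, (1 - ψ(z_j, ζ_n)²))`,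
which tends to `0` uniformly on compacta, contrary to the hypothesis.
-/

open ComplexConjugate

theorem Real.le_exp_neg_one_sub_sq_div_two (x : ℝ) : x ≤ Real.exp (-(1 - x ^ 2) / 2) := by
  refine (le_abs_self x).trans (abs_le_of_sq_le_sq ?_ (Real.exp_pos _).le)
  calc x ^ 2 ≤ Real.exp (x ^ 2 - 1) := by linarith [Real.add_one_le_exp (x ^ 2 - 1)]
    _ = Real.exp (-(1 - x ^ 2) / 2) ^ 2 := by rw [← Real.exp_nat_mul]; ring_nf

theorem Real.exp_neg_two_mul_one_sub_sq_le {x : ℝ} (hx : 1 / 2 ≤ x) (hx1 : x ≤ 1) :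
    Real.exp (-(2 * (1 - x ^ 2))) ≤ x := by
  have hx0 : 0 < x := by linarith
  rw [← Real.le_log_iff_exp_le hx0]
  refine le_trans ?_ (Real.one_sub_inv_le_log_of_pos hx0)
  have hinv : x⁻¹ ≤ 2 := by rw [inv_le_comm₀ hx0 two_pos]; linarith
  have := mul_inv_cancel₀ hx0.ne'
  nlinarith

theorem le_tprod_of_forall_le_prod {ι : Type*} {f : ι → ℝ} {a : ℝ} (ha : a ≤ 1)
    (h : ∀ s : Finset ι, a ≤ ∏ i ∈ s, f i) : a ≤ ∏' i, f i := by
  by_cases hf : Multipliable f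
  · exact ge_of_tendsto hf.hasProd (Filter.Eventually.of_forall h)
  · rwa [tprod_eq_one_of_not_multipliable hf]

theorem norm_tprod_le_prod_norm {ι R : Type*} [NormedCommRing R] [NormOneClass R] {f : ι → R}
    (hf : Multipliable f) (hf1 : ∀ i, ‖f i‖ ≤ 1) (s : Finset ι) :
    ‖∏' i, f i‖ ≤ ∏ i ∈ s, ‖f i‖ := by
  classical
  refine le_of_tendsto ((continuous_norm.tendsto _).comp hf.hasProd) ?_
  filter_upwards [Filter.eventually_ge_atTop s] with t hst
  calc ‖∏ i ∈ t, f i‖ ≤ ∏ i ∈ t, ‖f i‖ := Finset.norm_prod_le t f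
    _ = (∏ i ∈ t \ s, ‖f i‖) * ∏ i ∈ s, ‖f i‖ := (Finset.prod_sdiff hst).symm
    _ ≤ ∏ i ∈ s, ‖f i‖ :=
      mul_le_of_le_one_left (Finset.prod_nonneg fun i _ => norm_nonneg _)
        (Finset.prod_le_one (fun i _ => norm_nonneg _) fun i _ => hf1 i)

namespace SimpleGraph

variable (G : SimpleGraph ℕ) (D : ℕ)

def greedyColor : ℕ → Fin (D + 1)
  | k =>
    haveI := Classical.propDecidable
    if h : ∃ c, ∀ j (_ : j < k), G.Adj j k → greedyColor j ≠ c then h.choose else 0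

variable {G D}

theorem greedyColor_ne [DecidableRel G.Adj]
    (hD : ∀ k, ((Finset.range k).filter (G.Adj · k)).card ≤ D) {j k : ℕ} (hjk : j < k)
    (hadj : G.Adj j k) : greedyColor G D j ≠ greedyColor G D k := by
  have hfree : ∃ c, ∀ j (_ : j < k), G.Adj j k → greedyColor G D j ≠ c := by
    obtain ⟨c, -, hc⟩ := Finset.exists_mem_notMem_of_card_lt_card (t := Finset.univ)
      (s := ((Finset.range k).filter (G.Adj · k)).image (greedyColor G D))
      (by simpa using Finset.card_image_le.trans_lt (Nat.lt_succ_of_le (hD k)))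
    exact ⟨c, fun j hj hadj hjc => hc (Finset.mem_image.2 ⟨j, by simp [hj, hadj], hjc⟩)⟩
  have hcolor : greedyColor G D k = hfree.choose := by rw [greedyColor, dif_pos hfree]
  exact hcolor ▸ hfree.choose_spec j hjk hadj

theorem colorable_succ_of_card_filter_adj_le [DecidableRel G.Adj]
    (hD : ∀ k, ((Finset.range k).filter (G.Adj · k)).card ≤ D) : G.Colorable (D + 1) := by
  refine ⟨Coloring.mk (greedyColor G D) fun {j k} hadj => ?_⟩
  rcases lt_or_gt_of_ne hadj.ne with hjk | hkj
  · exact greedyColor_ne hD hjk hadj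
  · exact (greedyColor_ne hD hkj hadj.symm).symm

end SimpleGraph

theorem one_sub_conj_mul_ne_zero {a z : ℂ} (ha : ‖a‖ < 1) (hz : ‖z‖ ≤ 1) : 1 - conj a * z ≠ 0 := by
  refine sub_ne_zero.2 fun h => ?_
  have : ‖conj a * z‖ < 1 := by
    rw [norm_mul, Complex.norm_conj]
    nlinarith [norm_nonneg a, norm_nonneg z]
  simp [← h] at this

theorem pseudoDist_nonneg (z w : ℂ) : 0 ≤ pseudoDist z w := norm_nonneg _

theorem pseudoDist_comm (z w : ℂ) : pseudoDist z w = pseudoDist w z := by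
  rw [pseudoDist, pseudoDist, norm_div, norm_div, norm_sub_rev, ← Complex.norm_conj (1 - _ * w)]
  simp [mul_comm]

theorem one_sub_pseudoDist_sq {z w : ℂ} (hz : ‖z‖ < 1) (hw : ‖w‖ < 1) :
    1 - pseudoDist z w ^ 2 = (1 - ‖z‖ ^ 2) * (1 - ‖w‖ ^ 2) / ‖1 - conj w * z‖ ^ 2 := by
  have hd : ‖1 - conj w * z‖ ^ 2 ≠ 0 := by simpa using one_sub_conj_mul_ne_zero hw hz.le
  rw [pseudoDist, norm_div, div_pow, eq_div_iff hd, sub_mul, div_mul_cancel₀ _ hd]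
  simp only [← Complex.normSq_eq_norm_sq, Complex.normSq_apply, Complex.sub_re, Complex.sub_im,
    Complex.mul_re, Complex.mul_im, Complex.conj_re, Complex.conj_im, Complex.one_re,
    Complex.one_im]
  ring

theorem pseudoDist_lt_one {z w : ℂ} (hz : ‖z‖ < 1) (hw : ‖w‖ < 1) : pseudoDist z w < 1 := by
  have hpos : 0 < 1 - pseudoDist z w ^ 2 := by
    rw [one_sub_pseudoDist_sq hz hw]
    have := one_sub_conj_mul_ne_zero hw hz.le
    have := norm_nonneg z; have := norm_nonneg w
    apply div_pos <;> [apply mul_pos <;> nlinarith; positivity]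
  nlinarith [pseudoDist_nonneg z w]

theorem pseudoDist_le_exp {z w : ℂ} (hz : ‖z‖ < 1) (hw : ‖w‖ < 1) :
    pseudoDist z w ≤ Real.exp (-((1 - ‖z‖ ^ 2) * (1 - ‖w‖ ^ 2) / 8)) := by
  refine (Real.le_exp_neg_one_sub_sq_div_two _).trans (Real.exp_le_exp.2 ?_)
  have hd : ‖1 - conj w * z‖ ≤ 2 := by
    refine (norm_sub_le _ _).trans ?_
    rw [norm_one, norm_mul, Complex.norm_conj]
    nlinarith [norm_nonneg z, norm_nonneg w]
  have hd0 : 0 < ‖1 - conj w * z‖ := norm_pos_iff.2 (one_sub_conj_mul_ne_zero hw hz.le)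
  have hzw : 0 ≤ (1 - ‖z‖ ^ 2) * (1 - ‖w‖ ^ 2) := by
    apply mul_nonneg <;> nlinarith [norm_nonneg z, norm_nonneg w]
  rw [one_sub_pseudoDist_sq hz hw]
  have : (1 - ‖z‖ ^ 2) * (1 - ‖w‖ ^ 2) / 4 ≤ (1 - ‖z‖ ^ 2) * (1 - ‖w‖ ^ 2) / ‖1 - conj w * z‖ ^ 2 :=
    div_le_div_of_nonneg_left hzw (by positivity) (by nlinarith)
  linarith

theorem norm_mobius (a z : ℂ) : ‖mobius a z‖ = pseudoDist z a := by
  rw [mobius, pseudoDist, norm_div, norm_div, norm_sub_rev]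

theorem mobius_mobius {a z : ℂ} (ha : ‖a‖ < 1) (hz : ‖z‖ ≤ 1) : mobius a (mobius a z) = z := by
  have hz' : 1 - z * conj a ≠ 0 := mul_comm z (conj a) ▸ one_sub_conj_mul_ne_zero ha hz
  have ha' : 1 - a * conj a ≠ 0 := mul_comm a (conj a) ▸ one_sub_conj_mul_ne_zero ha ha.le
  rw [mobius, mobius]
  field_simp
  rw [show 1 - z * conj a - (a - z) * conj a = 1 - a * conj a by ring, div_eq_iff ha']
  ring

theorem pseudoDist_mobius_mobius {a z w : ℂ} (ha : ‖a‖ < 1) (hz : ‖z‖ ≤ 1) (hw : ‖w‖ ≤ 1) :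
    pseudoDist (mobius a z) (mobius a w) = pseudoDist z w := by
  have hz' : 1 - z * conj a ≠ 0 := mul_comm z (conj a) ▸ one_sub_conj_mul_ne_zero ha hz
  have hw' := one_sub_conj_mul_ne_zero ha hw
  have hw'' : 1 - a * conj w ≠ 0 := by
    simpa [mul_comm] using (map_ne_zero (starRingEnd ℂ)).2 hw'
  have ha' : 1 - a * conj a ≠ 0 := mul_comm a (conj a) ▸ one_sub_conj_mul_ne_zero ha ha.le
  have key : (mobius a z - mobius a w) / (1 - conj (mobius a w) * mobius a z) =
      (w - z) / (1 - conj w * z) * (conj (1 - conj a * w) / (1 - conj a * w)) := by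
    simp only [mobius, map_div₀, map_sub, map_mul, Complex.conj_conj, map_one]
    field_simp
    rw [show (a - z) * (1 - conj a * w) - (1 - z * conj a) * (a - w) =
        (1 - a * conj a) * (w - z) by ring,
      show (1 - z * conj a) * (1 - a * conj w) - (a - z) * (conj a - conj w) =
        (1 - a * conj a) * (1 - z * conj w) by ring, mul_div_mul_left _ _ ha']
  rw [pseudoDist, key, norm_mul, norm_div (conj _), Complex.norm_conj,
    div_self (norm_ne_zero_iff.2 hw'), mul_one, pseudoDist, norm_div, norm_div, norm_sub_rev]

theorem pseudoDist_mobius_left {a z w : ℂ} (ha : ‖a‖ < 1) (hz : ‖z‖ < 1) (hw : ‖w‖ < 1) :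
    pseudoDist (mobius a z) w = pseudoDist z (mobius a w) := by
  conv_lhs => rw [← mobius_mobius ha hw.le]
  exact pseudoDist_mobius_mobius ha hz.le ((norm_mobius a w).trans_le (pseudoDist_lt_one hw ha).le)

theorem norm_blaschkeFactor (a w : ℂ) : ‖blaschkeFactor a w‖ = pseudoDist w a := by
  by_cases ha : a = 0
  · simp [blaschkeFactor, pseudoDist, ha]
  · rw [blaschkeFactor, if_neg ha, norm_mul, norm_div, Complex.norm_conj, Complex.norm_real,
      Real.norm_of_nonneg (norm_nonneg a), div_self (norm_ne_zero_iff.2 ha), one_mul, ← mobius,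
      norm_mobius]

theorem norm_blaschkeFactor_sub_one_le {a w : ℂ} (ha0 : a ≠ 0) (ha : ‖a‖ < 1) (hw : ‖w‖ < 1) :
    ‖blaschkeFactor a w - 1‖ ≤ 2 * (1 - ‖a‖ ^ 2) / (‖a‖ * (1 - ‖w‖)) := by
  have hna : (‖a‖ : ℂ) ≠ 0 := by simpa using ha0
  have hd := one_sub_conj_mul_ne_zero ha hw.le
  have key : blaschkeFactor a w - 1 =
      (‖a‖ - 1) * (‖a‖ + conj a * w) / (‖a‖ * (1 - conj a * w)) := by
    rw [blaschkeFactor, if_neg ha0]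
    field_simp
    linear_combination Complex.conj_mul' a
  have hnum : ‖((‖a‖ : ℂ) - 1) * (‖a‖ + conj a * w)‖ ≤ 2 * (1 - ‖a‖ ^ 2) := by
    rw [norm_mul, ← Complex.ofReal_one, ← Complex.ofReal_sub, Complex.norm_real,
      Real.norm_of_nonpos (by linarith)]
    have : ‖(‖a‖ : ℂ) + conj a * w‖ ≤ 2 := by
      refine (norm_add_le _ _).trans ?_
      rw [Complex.norm_real, Real.norm_of_nonneg (norm_nonneg a), norm_mul, Complex.norm_conj]
      nlinarith [norm_nonneg a, norm_nonneg w]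
    nlinarith [norm_nonneg a]
  have hden : ‖a‖ * (1 - ‖w‖) ≤ ‖(‖a‖ : ℂ) * (1 - conj a * w)‖ := by
    rw [norm_mul, Complex.norm_real, Real.norm_of_nonneg (norm_nonneg a)]
    refine mul_le_mul_of_nonneg_left ?_ (norm_nonneg a)
    have := norm_sub_norm_le 1 (conj a * w)
    rw [norm_one, norm_mul, Complex.norm_conj] at this
    nlinarith [norm_nonneg a, norm_nonneg w]
  rw [key, norm_div]
  exact div_le_div₀ (by nlinarith [norm_nonneg a]) hnum
    (mul_pos (norm_pos_iff.2 ha0) (by linarith)) hden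

namespace IsBlaschkeSeq

variable {Z : ℕ → ℂ} (hZ : IsBlaschkeSeq Z)
include hZ

theorem multipliable_blaschkeFactor {w : ℂ} (hw : ‖w‖ < 1) :
    Multipliable fun k => blaschkeFactor (Z k) w := by
  have hsum : Summable fun k => blaschkeFactor (Z k) w - 1 := by
    refine (hZ.2.mul_left (4 / (1 - ‖w‖))).of_norm_bounded_eventually ?_
    filter_upwards [hZ.2.tendsto_cofinite_zero.eventually_lt_const (by norm_num : (0 : ℝ) < 3 / 4)]
      with k hk
    have hZk : 1 / 2 ≤ ‖Z k‖ := by nlinarith [norm_nonneg (Z k)]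
    refine (norm_blaschkeFactor_sub_one_le (norm_pos_iff.1 (by linarith)) (hZ.1 k) hw).trans ?_
    rw [div_mul_eq_mul_div, div_le_div_iff₀ (by nlinarith) (by linarith)]
    have h1 : 0 ≤ 1 - ‖Z k‖ ^ 2 := sub_nonneg.2 (pow_le_one₀ (norm_nonneg _) (hZ.1 k).le)
    have := mul_nonneg (mul_nonneg h1 (sub_pos.2 hw).le) (by linarith : 0 ≤ 2 * ‖Z k‖ - 1)
    linarith
  simpa using Complex.multipliable_one_add_of_summable hsum

theorem norm_blaschkeProduct_le_prod {w : ℂ} (hw : ‖w‖ < 1) (s : Finset ℕ) :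
    ‖blaschkeProduct Z w‖ ≤ ∏ k ∈ s, pseudoDist w (Z k) := by
  simpa only [blaschkeProduct, norm_blaschkeFactor] using
    norm_tprod_le_prod_norm (hZ.multipliable_blaschkeFactor hw)
      (fun k => (norm_blaschkeFactor _ _).trans_le (pseudoDist_lt_one hw (hZ.1 k)).le) s

theorem norm_blaschkeProduct_mobius_le {a z : ℂ} (ha : ‖a‖ < 1) (hz : ‖z‖ < 1) (s : Finset ℕ) :
    ‖blaschkeProduct Z (mobius a z)‖ ≤
      Real.exp (-((1 - ‖z‖ ^ 2) / 8 * ∑ k ∈ s, (1 - pseudoDist (Z k) a ^ 2))) := by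
  have hmob : ∀ k, ‖mobius a (Z k)‖ < 1 := fun k =>
    (norm_mobius _ _).trans_lt (pseudoDist_lt_one (hZ.1 k) ha)
  calc ‖blaschkeProduct Z (mobius a z)‖ ≤ ∏ k ∈ s, pseudoDist (mobius a z) (Z k) :=
        hZ.norm_blaschkeProduct_le_prod ((norm_mobius _ _).trans_lt (pseudoDist_lt_one hz ha)) s
    _ = ∏ k ∈ s, pseudoDist z (mobius a (Z k)) :=
        Finset.prod_congr rfl fun k _ => pseudoDist_mobius_left ha hz (hZ.1 k)
    _ ≤ ∏ k ∈ s, Real.exp (-((1 - ‖z‖ ^ 2) * (1 - pseudoDist (Z k) a ^ 2) / 8)) :=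
        Finset.prod_le_prod (fun k _ => norm_nonneg _) fun k _ =>
          norm_mobius a (Z k) ▸ pseudoDist_le_exp hz (hmob k)
    _ = _ := by
        rw [← Real.exp_sum, Finset.mul_sum, ← Finset.sum_neg_distrib]
        congr 1
        refine Finset.sum_congr rfl fun k _ => by ring

theorem tendstoZeroOnCompacts_comp_mobius {a : ℕ → ℂ} (ha : ∀ n, ‖a n‖ < 1) {s : ℕ → Finset ℕ}
    (hs : Tendsto (fun n => ∑ k ∈ s n, (1 - pseudoDist (Z k) (a n) ^ 2)) atTop atTop) :
    TendstoZeroOnCompacts fun n z => blaschkeProduct Z (mobius (a n) z) := by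
  intro K hK hKc
  obtain ⟨r, ⟨hr0, hr1⟩, hKr⟩ := exists_pos_lt_subset_ball one_pos hKc.isClosed hK
  have hc : 0 < (1 - r ^ 2) / 8 := by nlinarith
  have hbound : ∀ n, ∀ z ∈ K, ‖blaschkeProduct Z (mobius (a n) z)‖ ≤
      Real.exp (-((1 - r ^ 2) / 8 * ∑ k ∈ s n, (1 - pseudoDist (Z k) (a n) ^ 2))) := by
    intro n z hz
    have hzr : ‖z‖ < r := mem_ball_zero_iff.1 (hKr hz)
    refine (hZ.norm_blaschkeProduct_mobius_le (ha n) (hzr.trans hr1) (s n)).trans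
      (Real.exp_le_exp.2 (neg_le_neg (mul_le_mul_of_nonneg_right ?_ ?_)))
    · nlinarith [norm_nonneg z]
    · exact Finset.sum_nonneg fun k _ => sub_nonneg.2 <|
        pow_le_one₀ (norm_nonneg _) (pseudoDist_lt_one (hZ.1 k) (ha n)).le
  have hlim := Real.tendsto_exp_neg_atTop_nhds_zero.comp (hs.const_mul_atTop hc)
  rw [Metric.tendstoUniformlyOn_iff]
  intro ε hε
  filter_upwards [hlim.eventually (gt_mem_nhds hε)] with n hn z hz
  rw [dist_zero_left]
  exact (hbound n z hz).trans_lt hn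

end IsBlaschkeSeq

theorem uniformlySeparated_of_forall_sum_le {ι : Type*} {Z : ι → ℂ} {M : ℝ}
    (hZ : ∀ i, ‖Z i‖ < 1) (hsep : ∀ i j, i ≠ j → 1 / 2 ≤ pseudoDist (Z i) (Z j))
    (hM : ∀ j (s : Finset ι), ∑ i ∈ s, (1 - pseudoDist (Z i) (Z j) ^ 2) ≤ M) :
    UniformlySeparated Z := by
  refine ⟨Real.exp (-(2 * max M 0)), Real.exp_pos _, fun j => le_tprod_of_forall_le_prod ?_ ?_⟩
  · exact Real.exp_le_one_iff.2 (by simp)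
  intro s
  calc Real.exp (-(2 * max M 0))
      ≤ Real.exp (-(2 * ∑ i ∈ s, (1 - pseudoDist (Z i.1) (Z j) ^ 2))) := by
        refine Real.exp_le_exp.2 (neg_le_neg (mul_le_mul_of_nonneg_left ?_ two_pos.le))
        exact le_max_of_le_left ((Finset.sum_map s (Function.Embedding.subtype _)
          fun i => 1 - pseudoDist (Z i) (Z j) ^ 2).symm.trans_le (hM j _))
    _ = ∏ i ∈ s, Real.exp (-(2 * (1 - pseudoDist (Z i.1) (Z j) ^ 2))) := by
        rw [← Real.exp_sum, Finset.mul_sum, Finset.sum_neg_distrib]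
    _ ≤ ∏ i ∈ s, pseudoDist (Z i.1) (Z j) :=
        Finset.prod_le_prod (fun i _ => (Real.exp_pos _).le) fun i _ =>
          Real.exp_neg_two_mul_one_sub_sq_le (hsep _ _ i.2) (pseudoDist_lt_one (hZ _) (hZ _)).le

theorem finiteUnionUnifSep_of_forall_sum_le {Z : ℕ → ℂ} {M : ℝ} (hZ : ∀ k, ‖Z k‖ < 1)
    (hM : ∀ k (s : Finset ℕ), ∑ j ∈ s, (1 - pseudoDist (Z j) (Z k) ^ 2) ≤ M) :
    FiniteUnionUnifSep Z := by
  classical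
  let G := SimpleGraph.fromRel fun j k => pseudoDist (Z j) (Z k) < 1 / 2
  have hdeg : ∀ k, ((Finset.range k).filter (G.Adj · k)).card ≤ ⌊2 * M⌋₊ := by
    intro k
    have hterm : ∀ j ∈ (Finset.range k).filter (G.Adj · k),
        1 / 2 ≤ 1 - pseudoDist (Z j) (Z k) ^ 2 := by
      intro j hj
      obtain ⟨-, hjk | hkj⟩ := (Finset.mem_filter.1 hj).2
      · nlinarith [pseudoDist_nonneg (Z j) (Z k)]
      · rw [pseudoDist_comm] at hkj
        nlinarith [pseudoDist_nonneg (Z j) (Z k)]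
    have := Finset.card_nsmul_le_sum _ _ _ hterm
    rw [nsmul_eq_mul] at this
    exact Nat.le_floor (by linarith [hM k ((Finset.range k).filter (G.Adj · k))])
  obtain ⟨C⟩ := SimpleGraph.colorable_succ_of_card_filter_adj_le hdeg
  refine ⟨_, C, fun c =>
    uniformlySeparated_of_forall_sum_le (M := M) (fun i => hZ i.1) ?_ fun j s => ?_⟩
  · intro i j hij
    by_contra! h
    exact C.valid ((SimpleGraph.fromRel_adj _ _ _).2 ⟨Subtype.coe_injective.ne hij, Or.inl h⟩)
      (i.2.trans j.2.symm)
  · exact (Finset.sum_map s (Function.Embedding.subtype _)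
      fun i => 1 - pseudoDist (Z i) (Z j.1) ^ 2).symm.trans_le (hM j.1 _)

/-- Let `Z` be a Blaschke sequence with Blaschke product `B`. If for every
sequence `(ζ_n)` of points of `Z` the compositions `B ∘ φ_{ζ_n}` do not tend to `0` uniformly on
compact subsets of the disk, then `Z` is a finite union of uniformly separated sequences. -/
theorem test_on_zeros_suffices
    (Z : ℕ → ℂ) (hZ : IsBlaschkeSeq Z)
    (h : ∀ s : ℕ → ℕ,
      ¬ TendstoZeroOnCompacts (fun n z => blaschkeProduct Z (mobius (Z (s n)) z))) :
    FiniteUnionUnifSep Z := by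
  by_cases hM : ∃ M, ∀ k (s : Finset ℕ), ∑ j ∈ s, (1 - pseudoDist (Z j) (Z k) ^ 2) ≤ M
  · obtain ⟨M, hM⟩ := hM
    exact finiteUnionUnifSep_of_forall_sum_le hZ.1 hM
  · push Not at hM
    choose k s hks using fun n : ℕ => hM n
    refine absurd (hZ.tendstoZeroOnCompacts_comp_mobius (fun n => hZ.1 (k n)) (s := s) ?_) (h k)
    exact tendsto_atTop_mono (fun n => (hks n).le) tendsto_natCast_atTop_atTop

end
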